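/- Let W be a group generated by n elements s₁, …, sₙ, let C = ⟨t⟩ be a cyclic group of order 2ⁿ, and form the (standard, restricted = unrestricted) wreath product W ≀ C = W^C ⋊ C, where c ∈ C acts on φ : C → W by (c·φ)(x) = φ(xc). Let x : C → W be the function with x(t^{2^{i−1}}) = s_i for i = 1, …, n and x(c) = 1 for all other c ∈ C. Then for every w in the derived subgroup [W,W], the element (φ_w, 1) of W ≀ C, where φ_w(t) = w and φ_w(c) = 1 for c ≠ t, belongs to the derived subgroup of the subgroup ⟨(x,1), (1,t)⟩ of W ≀ C; in particular [W,W] embeds into the 2-generated group ⟨(x,1), (1,t)⟩. -/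

import Mathlib

/-- The action of `C` on `C → W` by right translation: `(c · φ) x = φ (x * c)`. -/
def translationAction (W C : Type*) [Group W] [Group C] : C →* MulAut (C → W) where
  toFun c :=
    { toFun := fun φ x => φ (x * c)
      invFun := fun φ x => φ (x * c⁻¹)
      left_inv := fun φ => funext fun x => by
        show φ (x * c⁻¹ * c) = φ x
        rw [mul_assoc, inv_mul_cancel, mul_one]
      right_inv := fun φ => funext fun x => by
        show φ (x * c * c⁻¹) = φ x
        rw [mul_assoc, mul_inv_cancel, mul_one]
      map_mul' := fun φ ψ => rfl }
  map_one' := by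
    ext φ x
    simp
  map_mul' u v := by
    ext φ x
    simp [mul_assoc]

/-!
The translates `χᵢ x = χ (x * t⁻¹ * t ^ 2 ^ i)` lie in `K` and take the value `sᵢ` at `t`.
A sum `2 ^ a + 2 ^ b` with `a, b < n` determines `{a, b}` even modulo `2 ^ n`, so for `i ≠ j`
the supports of `χᵢ` and `χⱼ` meet only in `t`, and `⁅χᵢ, χⱼ⁆` is supported at `t` with value
`⁅sᵢ, sⱼ⁆`. The `w` with `(φ_w, 1) ∈ ⁅K, K⁆` form a subgroup of `W`, normal because the values
at `t` of the elements of `K ∩ W ^ C` exhaust `W`; it contains every `⁅sᵢ, sⱼ⁆`, hence `[W, W]`.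
-/

open scoped commutatorElement
open SemidirectProduct Subgroup

theorem Nat.two_pow_add_two_pow_eq_two_pow_add_two_pow {a b c d : ℕ}
    (h : 2 ^ a + 2 ^ b = 2 ^ c + 2 ^ d) : a = c ∧ b = d ∨ a = d ∧ b = c := by
  induction a generalizing b c d with
  | zero =>
    obtain _ | b := b <;> obtain _ | c := c <;> obtain _ | d := d <;>
      simp only [pow_succ, pow_zero] at h ⊢ <;> grind [Nat.one_le_two_pow, Nat.pow_right_injective]
  | succ a ih =>
    obtain _ | b := b <;> obtain _ | c := c <;> obtain _ | d := d <;>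
      simp only [pow_succ, pow_zero] at h ⊢
    case succ.succ.succ => have := @ih b c d (by omega); omega
    all_goals grind [Nat.one_le_two_pow, Nat.pow_right_injective]

theorem Nat.two_pow_add_two_pow_eq_of_modEq {n a b c d : ℕ} (ha : a < n) (hb : b < n)
    (hc : c < n) (hd : d < n) (h : 2 ^ a + 2 ^ b ≡ 2 ^ c + 2 ^ d [MOD 2 ^ n]) :
    2 ^ a + 2 ^ b = 2 ^ c + 2 ^ d := by
  have hn : 2 ^ (n - 1) + 2 ^ (n - 1) = 2 ^ n := by rw [← two_mul, ← pow_succ']; congr 1; omega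
  have hle : ∀ m < n, 2 ^ m ≤ 2 ^ (n - 1) := fun m hm => Nat.pow_le_pow_right two_pos (by omega)
  have := hle a ha; have := hle b hb; have := hle c hc; have := hle d hd
  have := a.one_le_two_pow; have := b.one_le_two_pow; have := c.one_le_two_pow
  have := d.one_le_two_pow
  -- both sums lie in `[2, 2 ^ n]`, so after subtracting one they are reduced residues
  have h' : 2 ^ a + 2 ^ b - 1 ≡ 2 ^ c + 2 ^ d - 1 [MOD 2 ^ n] :=
    Nat.ModEq.add_right_cancel' 1 <| by
      rwa [Nat.sub_add_cancel (by omega), Nat.sub_add_cancel (by omega)]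
  have := h'.eq_of_lt_of_lt (by omega) (by omega)
  omega

theorem eq_one_of_mul_two_pow_eq_two_pow {C : Type*} [Group C] {t y : C} {n : ℕ}
    (hord : orderOf t = 2 ^ n) {i j a b : Fin n} (hij : i ≠ j)
    (ha : y * t ^ 2 ^ (i : ℕ) = t ^ 2 ^ (a : ℕ)) (hb : y * t ^ 2 ^ (j : ℕ) = t ^ 2 ^ (b : ℕ)) :
    y = 1 := by
  have hpow : t ^ (2 ^ (a : ℕ) + 2 ^ (j : ℕ)) = t ^ (2 ^ (b : ℕ) + 2 ^ (i : ℕ)) := by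
    rw [pow_add, pow_add, ← ha, ← hb, mul_assoc, mul_assoc, ← pow_add, ← pow_add, add_comm]
  rw [pow_eq_pow_iff_modEq, hord] at hpow
  rcases Nat.two_pow_add_two_pow_eq_two_pow_add_two_pow
    (Nat.two_pow_add_two_pow_eq_of_modEq a.2 j.2 b.2 i.2 hpow) with ⟨-, hji⟩ | ⟨hai, -⟩
  · exact absurd (Fin.ext hji.symm) hij
  · rwa [← Fin.ext hai, mul_eq_right] at ha

theorem translate_eq_one_or_translate_eq_one {C W : Type*} [Group C] [One W] {t : C} {n : ℕ}
    (hord : orderOf t = 2 ^ n) {χ : C → W}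
    (hχ : ∀ c : C, (∀ i : Fin n, c ≠ t ^ (2 ^ (i : ℕ))) → χ c = 1) {i j : Fin n} (hij : i ≠ j) :
    ∀ x ≠ t, χ (x * (t⁻¹ * t ^ 2 ^ (i : ℕ))) = 1 ∨ χ (x * (t⁻¹ * t ^ 2 ^ (j : ℕ))) = 1 := by
  intro x hx
  by_contra! hne
  obtain ⟨a, ha⟩ : ∃ a : Fin n, x * (t⁻¹ * t ^ 2 ^ (i : ℕ)) = t ^ 2 ^ (a : ℕ) := by
    by_contra! h; exact hne.1 (hχ _ h)
  obtain ⟨b, hb⟩ : ∃ b : Fin n, x * (t⁻¹ * t ^ 2 ^ (j : ℕ)) = t ^ 2 ^ (b : ℕ) := by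
    by_contra! h; exact hne.2 (hχ _ h)
  rw [← mul_assoc] at ha hb
  exact hx (mul_inv_eq_one.mp (eq_one_of_mul_two_pow_eq_two_pow hord hij ha hb))

theorem commutator_le_of_commutatorElement_mem {G : Type*} [Group G] {S : Set G}
    (hS : closure S = ⊤) {N : Subgroup G} [N.Normal] (h : ∀ a ∈ S, ∀ b ∈ S, ⁅a, b⁆ ∈ N) :
    commutator G ≤ N := by
  have hS' : closure (QuotientGroup.mk' N '' S) = ⊤ := by
    rw [← MonoidHom.map_closure, hS, map_top_of_surjective _ (QuotientGroup.mk'_surjective N)]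
  have : IsMulCommutative (closure (QuotientGroup.mk' N '' S)) := by
    refine isMulCommutative_closure ?_
    rintro _ ⟨a, ha, rfl⟩ _ ⟨b, hb, rfl⟩
    rw [← commutatorElement_eq_one_iff_mul_comm, ← map_commutatorElement]
    exact (QuotientGroup.eq_one_iff _).mpr (h a ha b hb)
  rw [commutator_def, commutator_le]
  intro a _ b _
  rw [← QuotientGroup.eq_one_iff]
  change QuotientGroup.mk' N ⁅a, b⁆ = 1
  rw [map_commutatorElement, commutatorElement_eq_one_iff_mul_comm]
  exact setLike_mul_comm (hS' ▸ mem_top _) (hS' ▸ mem_top _)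

theorem Pi.commutatorElement_eq_mulSingle {ι : Type*} [DecidableEq ι] {W : Type*} [Group W]
    {φ ψ : ι → W} {t : ι} (h : ∀ x ≠ t, φ x = 1 ∨ ψ x = 1) :
    ⁅φ, ψ⁆ = Pi.mulSingle t ⁅φ t, ψ t⁆ := by
  funext x
  by_cases hx : x = t
  · subst hx; simp only [Pi.mulSingle_eq_same]; rfl
  · rw [Pi.mulSingle_eq_of_ne hx]
    rcases h x hx with h | h <;> simp [commutatorElement_def, h]

section Wreath

variable {W C : Type*} [Group W] [Group C]

theorem inl_translate_mem {H : Subgroup ((C → W) ⋊[translationAction W C] C)} {φ : C → W} {c : C}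
    (hφ : inl φ ∈ H) (hc : inr c ∈ H) : inl (fun x => φ (x * c)) ∈ H := by
  rw [show inl (fun x => φ (x * c)) = inr c * inl φ * inr c⁻¹ from inl_aut c φ, map_inv]
  exact mul_mem (mul_mem hc hφ) (inv_mem hc)

variable [DecidableEq C]

theorem normal_comap_inl_mulSingle_commutator (H : Subgroup ((C → W) ⋊[translationAction W C] C))
    (t : C) (hH : ∀ w : W, ∃ φ : C → W, inl φ ∈ H ∧ φ t = w) :
    (⁅H, H⁆.comap (inl.comp (MonoidHom.mulSingle (fun _ => W) t))).Normal := by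
  refine ⟨fun w hw g => ?_⟩
  obtain ⟨φ, hφ, rfl⟩ := hH g
  have hconj : Pi.mulSingle t (φ t * w * (φ t)⁻¹) = φ * Pi.mulSingle t w * φ⁻¹ := by
    funext x
    by_cases hx : x = t
    · subst hx; simp
    · simp [Pi.mulSingle_eq_of_ne hx]
  simp only [mem_comap, MonoidHom.coe_comp, Function.comp_apply, MonoidHom.mulSingle_apply] at hw ⊢
  rw [hconj, map_mul, map_mul, map_inv]
  exact (mem_normalizer_iff.mp (normalizer_commutator_ge_left H H hφ) _).mp hw

end Wreath

theorem derived_subgroup_imbeds_in_two_generated_general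
    {W C : Type} [Group W] [Group C] [DecidableEq C]
    (n : ℕ) (s : Fin n → W) (hWgen : Subgroup.closure (Set.range s) = ⊤)
    (t : C) (hord : orderOf t = 2 ^ n)
    (χ : C → W)
    (hχ₁ : ∀ i : Fin n, χ (t ^ (2 ^ (i : ℕ))) = s i)
    (hχ₂ : ∀ c : C, (∀ i : Fin n, c ≠ t ^ (2 ^ (i : ℕ))) → χ c = 1)
    (K : Subgroup (SemidirectProduct (C → W) C (translationAction W C)))
    (hK : K = Subgroup.closure
      {SemidirectProduct.inl χ, SemidirectProduct.inr t}) :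
    (∀ w ∈ commutator W,
      SemidirectProduct.inl (Pi.mulSingle t w) ∈ ⁅K, K⁆) ∧
    ∃ ψ : ↥(commutator W) →* ↥K, Function.Injective ψ := by
  have hχK : inl χ ∈ K := hK ▸ subset_closure (Set.mem_insert _ _)
  have htK : inr t ∈ K := hK ▸ subset_closure (Set.mem_insert_of_mem _ rfl)
  set χ' : Fin n → C → W := fun i x => χ (x * (t⁻¹ * t ^ 2 ^ (i : ℕ)))
  have hχ'K (i : Fin n) : inl (χ' i) ∈ K := inl_translate_mem hχK <| by
    rw [map_mul, map_inv, map_pow]; exact mul_mem (inv_mem htK) (pow_mem htK _)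
  have hχ't (i : Fin n) : χ' i t = s i := by simp only [χ', mul_inv_cancel_left, hχ₁]
  have hsurj (w : W) : ∃ φ : C → W, inl φ ∈ K ∧ φ t = w := by
    have : closure (Set.range s) ≤ (K.comap inl).map (Pi.evalMonoidHom (fun _ => W) t) :=
      (closure_le _).mpr (by rintro _ ⟨i, rfl⟩; exact ⟨χ' i, hχ'K i, hχ't i⟩)
    simpa using this (hWgen ▸ mem_top w)
  have := normal_comap_inl_mulSingle_commutator K t hsurj
  have hle : commutator W ≤ ⁅K, K⁆.comap (inl.comp (MonoidHom.mulSingle (fun _ => W) t)) := by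
    refine commutator_le_of_commutatorElement_mem hWgen ?_
    rintro _ ⟨i, rfl⟩ _ ⟨j, rfl⟩
    rcases eq_or_ne i j with rfl | hij
    · simp
    · show inl (Pi.mulSingle t ⁅s i, s j⁆) ∈ ⁅K, K⁆
      rw [← hχ't i, ← hχ't j, ← Pi.commutatorElement_eq_mulSingle
        (translate_eq_one_or_translate_eq_one hord hχ₂ hij), map_commutatorElement]
      exact commutator_mem_commutator (hχ'K i) (hχ'K j)
  refine ⟨fun w hw => hle hw, ((inl.comp (MonoidHom.mulSingle (fun _ => W) t)).comp
    (commutator W).subtype).codRestrict K fun w => commutator_le_self K (hle w.2),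
    fun u v huv => ?_⟩
  exact Subtype.ext (Pi.mulSingle_injective t (inl_injective (congrArg Subtype.val huv)))

/-- Let `W` be generated by `s₁, …, sₙ`, let `C = ⟨t⟩` be cyclic of order `2 ^ n`, and
let `x : C → W` be the function with `x (t ^ 2 ^ (i - 1)) = sᵢ` and all other values
trivial. Then in the wreath product `W ≀ C = W^C ⋊ C`, every element `(φ_w, 1)` with
`w ∈ [W, W]`, `φ_w` supported at `t` with value `w`, lies in the derived subgroup of
the two-generated subgroup `⟨(x, 1), (1, t)⟩`; in particular `[W, W]` embeds into that
two-generated subgroup. -/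
theorem derived_subgroup_imbeds_in_two_generated
    {W C : Type} [Group W] [Group C] [DecidableEq C]
    (n : ℕ) (s : Fin n → W) (hWgen : Subgroup.closure (Set.range s) = ⊤)
    (t : C) (hord : orderOf t = 2 ^ n) (hCgen : Subgroup.closure ({t} : Set C) = ⊤)
    (χ : C → W)
    (hχ₁ : ∀ i : Fin n, χ (t ^ (2 ^ (i : ℕ))) = s i)
    (hχ₂ : ∀ c : C, (∀ i : Fin n, c ≠ t ^ (2 ^ (i : ℕ))) → χ c = 1)
    (K : Subgroup (SemidirectProduct (C → W) C (translationAction W C)))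
    (hK : K = Subgroup.closure
      {SemidirectProduct.inl χ, SemidirectProduct.inr t}) :
    (∀ w ∈ commutator W,
      SemidirectProduct.inl (Pi.mulSingle t w) ∈ ⁅K, K⁆) ∧
    ∃ ψ : ↥(commutator W) →* ↥K, Function.Injective ψ :=
  derived_subgroup_imbeds_in_two_generated_general n s hWgen t hord χ hχ₁ hχ₂ K hK
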